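/- There exists a compact set K ⊆ T² of two-dimensional measure zero that is a set of uniqueness for A(D̄²). Explicitly, with q₁, q₂, ... an enumeration of [0,1] ∩ ℚ and aₙ = 1/n, the set K = (⋃ₙ {(e^{i qₙ}, e^{i y}) : 0 ≤ y ≤ aₙ}) ∪ {(e^{i x}, 1) : x ∈ [0,1]} works. -/

import Mathlib

/-!
The set `K` is the image under `(x, y) ↦ (e^{ix}, e^{iy})` of a comb whose teeth
`{qₙ} × [0, 1/(n+1)]` shrink onto its base `[0,1] × {0}`; this makes it compact, and it lies in
countably many circles `{e^{iqₙ}} × T` and the circle `T × {1}`, so it is null.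

For uniqueness let `h = f - g`. A function `u` of the disc algebra vanishing on an arc of the
circle vanishes: finitely many rotations of the arc cover the circle, so the product of the rotated
copies of `u` vanishes on the circle, hence on the disc by the maximum principle, and by the
identity theorem one of the factors vanishes identically. Applied to the slices `h(e^{iqₙ}, ·)`,
this shows that every slice `h(·, z)` vanishes at the points `e^{iqₙ}`, which are dense in an arc;
so these slices vanish as well. Slices through boundary points belong to the disc algebra because
they are uniform limits of slices through interior points.
-/

open Complex Metric Set MeasureTheory

noncomputable def circleMeasure : Measure ℂ :=
  (ENNReal.ofReal (2 * Real.pi))⁻¹ •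
    Measure.map (fun θ : ℝ => Complex.exp (θ * Complex.I)) (volume.restrict (Ioc 0 (2 * Real.pi)))

open Topology Bornology
open scoped Real

theorem exists_nat_mul_add_int_mul_mem_Icc {p L : ℝ} (hp : 0 < p) (hL : 0 < L) (θ c : ℝ) :
    ∃ k < ⌈p / L⌉₊ + 1, ∃ m : ℤ, k * L + θ + m * p ∈ Icc c (c + L) := by
  -- reduce `c - θ` modulo `p` to `t ∈ [0, p)`; the first multiple of `L` above `t` works
  have hdiv := self_sub_toIcoMod_eq_mul hp 0 (c - θ)
  have ht := toIcoMod_mem_Ico' hp (c - θ)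
  set t := toIcoMod hp 0 (c - θ)
  have hk₁ : t ≤ ⌈t / L⌉₊ * L := (div_le_iff₀ hL).1 (Nat.le_ceil _)
  have hk₂ : ⌈t / L⌉₊ * L < t + L := by
    have := Nat.ceil_lt_add_one (div_nonneg ht.1 hL.le)
    rwa [← lt_div_iff₀ hL, add_div, div_self hL.ne']
  refine ⟨⌈t / L⌉₊, ?_, toIcoDiv hp 0 (c - θ), ?_, ?_⟩
  · exact Nat.lt_add_one_of_le (Nat.ceil_mono (div_le_div_of_nonneg_right ht.2.le hL.le))
  all_goals linarith

theorem exists_exp_mul_mem_arc {c L : ℝ} (hL : 0 < L) {z : ℂ} (hz : ‖z‖ = 1) :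
    ∃ k < ⌈2 * π / L⌉₊ + 1, ∃ y ∈ Icc c (c + L), exp ((k * L : ℝ) * I) * z = exp (y * I) := by
  obtain ⟨k, hk, m, hm⟩ := exists_nat_mul_add_int_mul_mem_Icc Real.two_pi_pos hL (arg z) c
  refine ⟨k, hk, _, hm, ?_⟩
  have hper := exp_mul_I_periodic.int_mul m (k * L + arg z)
  push_cast
  rw [hper, add_mul, exp_add]
  nth_rw 1 [← norm_mul_exp_arg_mul_I z]
  rw [hz, ofReal_one, one_mul]

theorem AnalyticOnNhd.exists_eqOn_zero_of_prod_eqOn_zero {𝕜 ι : Type*}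
    [NontriviallyNormedField 𝕜] {s : Finset ι} {f : ι → 𝕜 → 𝕜} {U : Set 𝕜}
    (hf : ∀ i ∈ s, AnalyticOnNhd 𝕜 (f i) U) (hU : IsOpen U) (hU' : IsPreconnected U)
    (hne : U.Nonempty) (h : ∀ z ∈ U, ∏ i ∈ s, f i z = 0) : ∃ i ∈ s, EqOn (f i) 0 U := by
  by_contra! hnz
  obtain ⟨z₀, hz₀⟩ := hne
  have hev : ∀ i ∈ s, ∀ᶠ z in 𝓝[≠] z₀, f i z ≠ 0 := fun i hi =>
    Filter.not_frequently.1 fun hfreq =>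
      hnz i hi ((hf i hi).eqOn_zero_of_preconnected_of_frequently_eq_zero hU' hz₀ hfreq)
  obtain ⟨z, hzs, hzU⟩ := ((Filter.eventually_all_finset s).2 hev |>.and
    (eventually_nhdsWithin_of_eventually_nhds (hU.mem_nhds hz₀))).exists
  exact Finset.prod_ne_zero_iff.2 hzs (h z hzU)

theorem DiffContOnCl.finsetProd {𝕜 ι : Type*} [NontriviallyNormedField 𝕜]
    {s : Set 𝕜} {t : Finset ι} {f : ι → 𝕜 → 𝕜}
    (hf : ∀ i ∈ t, DiffContOnCl 𝕜 (f i) s) : DiffContOnCl 𝕜 (fun z => ∏ i ∈ t, f i z) s :=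
  ⟨DifferentiableOn.fun_finsetProd fun i hi => (hf i hi).1,
    continuousOn_finsetProd t fun i hi => (hf i hi).2⟩

theorem DiffContOnCl.comp_mul_left_ball {u : ℂ → ℂ} (hu : DiffContOnCl ℂ u (ball 0 1)) {a : ℂ}
    (ha : ‖a‖ = 1) : DiffContOnCl ℂ (fun z => u (a * z)) (ball 0 1) :=
  hu.comp (differentiable_id.const_mul a).diffContOnCl fun z hz => by simpa [ha] using hz

theorem DiffContOnCl.eqOn_zero_of_eq_zero_on_arc {u : ℂ → ℂ} (hu : DiffContOnCl ℂ u (ball 0 1))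
    {c d : ℝ} (hcd : c < d) (hzero : ∀ y ∈ Icc c d, u (exp (y * I)) = 0) :
    EqOn u 0 (closedBall 0 1) := by
  obtain ⟨L, hL, rfl⟩ : ∃ L, 0 < L ∧ d = c + L := ⟨d - c, sub_pos.2 hcd, by ring⟩
  set e : ℕ → ℂ := fun k => exp ((k * L : ℝ) * I)
  have he (k : ℕ) : ‖e k‖ = 1 := norm_exp_ofReal_mul_I _
  have hprod : EqOn (fun z => ∏ k ∈ Finset.range (⌈2 * π / L⌉₊ + 1), u (e k * z)) 0
      (ball 0 1) := by
    refine Complex.eqOn_of_eqOn_frontier isBounded_ball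
      (DiffContOnCl.finsetProd fun k _ => hu.comp_mul_left_ball (he k)) diffContOnCl_const ?_
    intro z hz
    rw [frontier_ball 0 one_ne_zero, mem_sphere_zero_iff_norm] at hz
    obtain ⟨k, hk, y, hy, hyz⟩ := exists_exp_mul_mem_arc (c := c) hL hz
    exact Finset.prod_eq_zero (Finset.mem_range.2 hk) (by simp only [e, hyz, hzero y hy])
  obtain ⟨k, -, hk⟩ := AnalyticOnNhd.exists_eqOn_zero_of_prod_eqOn_zero
    (fun k _ => (hu.comp_mul_left_ball (he k)).1.analyticOnNhd isOpen_ball) isOpen_ball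
    (convex_ball 0 1).isPreconnected ⟨0, mem_ball_self one_pos⟩ hprod
  have hball : EqOn u 0 (ball 0 1) := fun z hz => by
    have hmem : (e k)⁻¹ * z ∈ ball (0 : ℂ) 1 := by simpa [he k] using hz
    simpa [← mul_assoc, mul_inv_cancel₀ (norm_ne_zero_iff.1 ((he k).trans_ne one_ne_zero))]
      using hk hmem
  exact hball.of_subset_closure hu.continuousOn_ball continuousOn_const ball_subset_closedBall
    (closure_ball 0 one_ne_zero).ge

section Slices

variable {F : Type*} [NormedAddCommGroup F] [NormedSpace ℂ F] [CompleteSpace F]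
  {h : ℂ × ℂ → F} {U V : Set ℂ}

theorem DiffContOnCl.slice_right (hh : DiffContOnCl ℂ h (U ×ˢ V)) (hU : IsBounded U)
    (hV : IsBounded V) (hVo : IsOpen V) {w : ℂ} (hw : w ∈ closure U) :
    DiffContOnCl ℂ (fun z => h (w, z)) V := by
  have hcont : ContinuousOn h (closure U ×ˢ closure V) := by
    rw [← closure_prod_eq]; exact hh.2
  refine ⟨?_, hcont.comp (continuous_const.prodMk continuous_id).continuousOn
    fun z hz => mk_mem_prod hw hz⟩
  have huc : UniformContinuousOn h (closure U ×ˢ V) :=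
    ((hU.isCompact_closure.prod hV.isCompact_closure).uniformContinuousOn_of_continuous
      hcont).mono (prod_mono subset_rfl subset_closure)
  have : (𝓝[U] w).NeBot := mem_closure_iff_nhdsWithin_neBot.1 hw
  refine TendstoLocallyUniformlyOn.differentiableOn (φ := 𝓝[U] w)
    (F := fun w' z => h (w', z)) ?_ ?_ hVo
  · have htu := huc.tendstoUniformlyOn (F := fun w' z => h (w', z)) hw
    exact TendstoUniformlyOn.tendstoLocallyUniformlyOn fun u hu =>
      (htu u hu).filter_mono (nhdsWithin_mono w subset_closure)
  · filter_upwards [self_mem_nhdsWithin] with w' hw'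
    exact hh.1.comp (differentiableOn_const _ |>.prodMk differentiableOn_id)
      fun z hz => mk_mem_prod hw' hz

theorem DiffContOnCl.slice_left (hh : DiffContOnCl ℂ h (U ×ˢ V)) (hU : IsBounded U)
    (hV : IsBounded V) (hUo : IsOpen U) {z : ℂ} (hz : z ∈ closure V) :
    DiffContOnCl ℂ (fun w => h (w, z)) U := by
  have hswap : DiffContOnCl ℂ (fun p : ℂ × ℂ => h (p.2, p.1)) (V ×ˢ U) :=
    hh.comp (differentiable_snd.prodMk differentiable_fst).diffContOnCl fun _ hp => ⟨hp.2, hp.1⟩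
  exact hswap.slice_right hV hU hUo hz

end Slices

theorem DiffContOnCl.eqOn_zero_of_eq_zero_on_arcs {h : ℂ × ℂ → ℂ}
    (hh : DiffContOnCl ℂ h (ball 0 1 ×ˢ ball 0 1)) {Q : Set ℝ} {a b : ℝ} (hab : a < b)
    (hQ : Icc a b ⊆ closure Q)
    (harc : ∀ x ∈ Q, ∃ c d : ℝ, c < d ∧ ∀ y ∈ Icc c d, h (exp (x * I), exp (y * I)) = 0) :
    EqOn h 0 (closedBall 0 1 ×ˢ closedBall 0 1) := by
  have hcl : closure (ball (0 : ℂ) 1) = closedBall 0 1 := closure_ball 0 one_ne_zero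
  have hexp (x : ℝ) : exp (x * I) ∈ closure (ball (0 : ℂ) 1) := by
    simp [hcl, norm_exp_ofReal_mul_I]
  have hcolumn : ∀ x ∈ Q, ∀ z ∈ closedBall (0 : ℂ) 1, h (exp (x * I), z) = 0 := by
    intro x hx
    obtain ⟨c, d, hcd, hzero⟩ := harc x hx
    have hslice := hh.slice_right isBounded_ball isBounded_ball isOpen_ball (hexp x)
    exact hslice.eqOn_zero_of_eq_zero_on_arc hcd hzero
  rintro ⟨w, z⟩ ⟨hw, hz⟩
  have hslice := hh.slice_left isBounded_ball isBounded_ball isOpen_ball (hcl ▸ hz)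
  have hrow : ∀ x ∈ Icc a b, h (exp (x * I), z) = 0 := by
    have hcont : Continuous fun x : ℝ => h (exp (x * I), z) :=
      hslice.2.comp_continuous (by fun_prop) hexp
    exact fun x hx => EqOn.closure (fun x hx => hcolumn x hx z hz) hcont continuous_const (hQ hx)
  exact hslice.eqOn_zero_of_eq_zero_on_arc hab hrow hw

theorem countable_preimage_exp_mul_I (z : ℂ) :
    ((fun θ : ℝ => exp (θ * I)) ⁻¹' {z}).Countable := by
  rcases eq_empty_or_nonempty ((fun θ : ℝ => exp (θ * I)) ⁻¹' {z}) with h | ⟨θ₀, hθ₀⟩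
  · simp [h]
  refine (countable_range fun n : ℤ => θ₀ + n * (2 * π)).mono fun θ hθ => ?_
  obtain ⟨n, hn⟩ := exp_eq_exp_iff_exists_int.1 (hθ.trans hθ₀.symm)
  refine ⟨n, ofReal_injective ?_⟩
  push_cast
  exact mul_right_cancel₀ I_ne_zero (by rw [hn]; ring)

instance : SFinite circleMeasure := by
  unfold circleMeasure; infer_instance

instance : NullSingletonClass circleMeasure := by
  refine ⟨fun z => ?_⟩
  rw [circleMeasure, Measure.smul_apply,
    Measure.map_apply (by fun_prop) (measurableSet_singleton z),
    Measure.restrict_apply' measurableSet_Ioc,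
    ((countable_preimage_exp_mul_I z).mono inter_subset_left).measure_zero, smul_zero]

theorem isCompact_union_iUnion_of_eventually_subset {X : Type*} [TopologicalSpace X]
    {A : Set X} {C : ℕ → Set X} (hA : IsCompact A) (hC : ∀ n, IsCompact (C n))
    (h : ∀ U, IsOpen U → A ⊆ U → ∀ᶠ n in Filter.atTop, C n ⊆ U) :
    IsCompact (A ∪ ⋃ n, C n) := by
  classical
  refine isCompact_of_finite_subcover fun U hUo hcover => ?_
  obtain ⟨s, hs⟩ := hA.elim_finite_subcover U hUo (subset_union_left.trans hcover)
  obtain ⟨N, hN⟩ := Filter.eventually_atTop.1 (h _ (isOpen_biUnion fun i _ => hUo i) hs)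
  obtain ⟨t, ht⟩ := ((Finset.range N).isCompact_biUnion fun n _ => hC n).elim_finite_subcover U
    hUo ((iUnion₂_subset fun n _ => subset_iUnion C n).trans (subset_union_right.trans hcover))
  refine ⟨s ∪ t, union_subset (hs.trans ?_) (iUnion_subset fun n => ?_)⟩
  · exact biUnion_mono Finset.subset_union_left fun _ _ => subset_rfl
  rcases lt_or_ge n N with hn | hn
  · exact (subset_biUnion_of_mem (u := C) (Finset.mem_range.2 hn)).trans
      (ht.trans (biUnion_mono Finset.subset_union_right fun _ _ => subset_rfl))
  · exact (hN n hn).trans (biUnion_mono Finset.subset_union_left fun _ _ => subset_rfl)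

def combSet (q : ℕ → ℝ) : Set (ℝ × ℝ) :=
  (⋃ n : ℕ, {q n} ×ˢ Icc 0 (1 / ((n : ℝ) + 1))) ∪ Icc 0 1 ×ˢ {0}

theorem isCompact_combSet {q : ℕ → ℝ} (hq : ∀ n, q n ∈ Icc (0 : ℝ) 1) :
    IsCompact (combSet q) := by
  have hA : IsCompact (Icc (0 : ℝ) 1 ×ˢ {(0 : ℝ)}) := isCompact_Icc.prod isCompact_singleton
  rw [combSet, union_comm]
  refine isCompact_union_iUnion_of_eventually_subset hA
    (fun n => isCompact_singleton.prod isCompact_Icc) fun U hU hAU => ?_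
  obtain ⟨δ, hδ, hδU⟩ := hA.exists_thickening_subset_open hU hAU
  filter_upwards [tendsto_one_div_add_atTop_nhds_zero_nat.eventually_lt_const hδ] with n hn
  rintro ⟨x, y⟩ ⟨rfl : x = q n, hy⟩
  refine hδU (mem_thickening_iff.2 ⟨(q n, 0), ⟨hq n, rfl⟩, ?_⟩)
  rw [Prod.dist_eq, dist_self, Real.dist_eq, sub_zero, abs_of_nonneg hy.1, max_eq_right hy.1]
  exact hy.2.trans_lt hn

theorem image_exp_mul_I_combSet (q : ℕ → ℝ) :
    (fun p : ℝ × ℝ => (exp (p.1 * I), exp (p.2 * I))) '' combSet q =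
      (⋃ n : ℕ, {p : ℂ × ℂ | ∃ y : ℝ, 0 ≤ y ∧ y ≤ 1 / (n + 1) ∧
        p = (exp (q n * I), exp (y * I))}) ∪
      {p : ℂ × ℂ | ∃ x ∈ Icc (0 : ℝ) 1, p = (exp (x * I), 1)} := by
  rw [combSet, image_union, image_iUnion]
  congr 1
  · refine iUnion_congr fun n => ?_
    ext p
    simp [eq_comm, and_assoc]
  · ext p
    simp [eq_comm]

theorem Icc_subset_closure_Icc_inter_range_ratCast {a b : ℝ} (hab : a < b) :
    Icc a b ⊆ closure (Icc a b ∩ range ((↑) : ℚ → ℝ)) :=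
  calc Icc a b = closure (Ioo a b) := (closure_Ioo hab.ne).symm
    _ ⊆ closure (Ioo a b ∩ range ((↑) : ℚ → ℝ)) :=
      closure_minimal (Rat.denseRange_cast.open_subset_closure_inter isOpen_Ioo) isClosed_closure
    _ ⊆ closure (Icc a b ∩ range ((↑) : ℚ → ℝ)) :=
      closure_mono (inter_subset_inter_left _ Ioo_subset_Icc_self)

/-- there is a compact subset of `T²` of zero two-dimensional measure that
is a set of uniqueness for the bidisc algebra `A(D̄²)`. Explicitly, given an enumeration
`q` of `[0,1] ∩ ℚ` and `aₙ = 1/n`, the set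
`K = (⋃ₙ {(e^{i qₙ}, e^{i y}) : 0 ≤ y ≤ aₙ}) ∪ {(e^{i x}, 1) : x ∈ [0,1]}` works. -/
theorem stmt17 (q : ℕ → ℝ)
    (hq : Set.range q = {x : ℝ | x ∈ Icc (0 : ℝ) 1 ∧ ∃ r : ℚ, (r : ℝ) = x})
    (K : Set (ℂ × ℂ))
    (hK : K = (⋃ n : ℕ, {p : ℂ × ℂ | ∃ y : ℝ, 0 ≤ y ∧ y ≤ 1 / (n + 1) ∧
        p = (Complex.exp (q n * Complex.I), Complex.exp (y * Complex.I))}) ∪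
      {p : ℂ × ℂ | ∃ x ∈ Icc (0 : ℝ) 1, p = (Complex.exp (x * Complex.I), 1)}) :
    IsCompact K ∧ K ⊆ sphere (0 : ℂ) 1 ×ˢ sphere (0 : ℂ) 1 ∧
    (circleMeasure.prod circleMeasure) K = 0 ∧
    (∀ f g : ℂ × ℂ → ℂ,
      ContinuousOn f (closedBall (0 : ℂ) 1 ×ˢ closedBall (0 : ℂ) 1) →
      DifferentiableOn ℂ f (ball (0 : ℂ) 1 ×ˢ ball (0 : ℂ) 1) →
      ContinuousOn g (closedBall (0 : ℂ) 1 ×ˢ closedBall (0 : ℂ) 1) →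
      DifferentiableOn ℂ g (ball (0 : ℂ) 1 ×ˢ ball (0 : ℂ) 1) →
      EqOn f g K → EqOn f g (closedBall (0 : ℂ) 1 ×ˢ closedBall (0 : ℂ) 1)) := by
  have hKcomb : K = (fun p : ℝ × ℝ => (exp (p.1 * I), exp (p.2 * I))) '' combSet q := by
    rw [hK, image_exp_mul_I_combSet]
  refine ⟨?_, ?_, ?_, ?_⟩
  · rw [hKcomb]
    exact (isCompact_combSet fun n => (hq.subset (mem_range_self n)).1).image (by fun_prop)
  · rw [hKcomb]
    rintro _ ⟨p, -, rfl⟩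
    simp [norm_exp_ofReal_mul_I]
  · have hcover : K ⊆ range (fun n => exp (q n * I)) ×ˢ univ ∪ univ ×ˢ {1} := by
      rw [hK]
      rintro _ (hp | ⟨x, -, rfl⟩)
      · obtain ⟨n, y, -, -, rfl⟩ := mem_iUnion.1 hp
        exact Or.inl ⟨mem_range_self n, mem_univ _⟩
      · exact Or.inr ⟨mem_univ _, rfl⟩
    refine measure_mono_null hcover (measure_union_null ?_ ?_)
    · rw [Measure.prod_prod, (countable_range _).measure_zero, zero_mul]
    · rw [Measure.prod_prod, measure_singleton, mul_zero]
  · intro f g hf hf' hg hg' hfg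
    have hcl : closure (ball (0 : ℂ) 1 ×ˢ ball (0 : ℂ) 1) = closedBall 0 1 ×ˢ closedBall 0 1 := by
      rw [closure_prod_eq, closure_ball 0 one_ne_zero]
    have hh : DiffContOnCl ℂ (f - g) (ball 0 1 ×ˢ ball 0 1) := ⟨hf'.sub hg', hcl ▸ hf.sub hg⟩
    have hQ : Icc (0 : ℝ) 1 ⊆ closure (range q) :=
      hq ▸ Icc_subset_closure_Icc_inter_range_ratCast zero_lt_one
    refine fun p hp => sub_eq_zero.1 (hh.eqOn_zero_of_eq_zero_on_arcs zero_lt_one hQ ?_ hp)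
    rintro _ ⟨n, rfl⟩
    refine ⟨0, 1 / (n + 1), by positivity, fun y hy => sub_eq_zero.2 (hfg ?_)⟩
    rw [hK]
    exact Or.inl (mem_iUnion.2 ⟨n, y, hy.1, hy.2, rfl⟩)
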